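/- arXiv:2507.06390 — 2 statements merged into one kernel-verified Lean document; each statement's English description precedes it below -/
import Mathlib

section
/- Behrend's theorem: for every ε > 0 there exists N such that for all n ≥ N there is a subset S ⊆ {1,...,n} with no 3-term arithmetic progression and |S| ≥ n^{1-ε}. -/
open Real Finset

/-- Behrend's theorem: for every `ε > 0`, for all sufficiently large `n` there is a
subset `S ⊆ {1,...,n}` with no nontrivial 3-term arithmetic progression and
`|S| ≥ n^(1-ε)`. -/
theorem behrend (ε : ℝ) (hε : 0 < ε) :
    ∃ N : ℕ, ∀ n ≥ N, ∃ S : Finset ℕ,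
      S ⊆ Finset.Icc 1 n ∧
      (∀ x ∈ S, ∀ y ∈ S, ∀ z ∈ S, x ≠ y → y ≠ z → x ≠ z → x + z ≠ 2 * y) ∧
      (S.card : ℝ) ≥ (n : ℝ) ^ ((1 : ℝ) - ε) := by
  refine ⟨max (⌈Real.exp (16 / ε ^ 2)⌉₊) 1, fun n hn => ?_⟩
  have hn1 : 1 ≤ n := le_trans (le_max_right _ _) hn
  have hn0 : (0 : ℝ) < n := by positivity
  have hlog : 16 / ε ^ 2 ≤ Real.log n := by
    rw [Real.le_log_iff_exp_le hn0]
    calc Real.exp (16 / ε ^ 2) ≤ (⌈Real.exp (16 / ε ^ 2)⌉₊ : ℝ) := Nat.le_ceil _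
    _ ≤ n := by exact_mod_cast le_trans (le_max_left _ _) hn
  have hlogpos : 0 ≤ Real.log n := le_trans (by positivity) hlog
  obtain ⟨t, hts, htcard, htfree⟩ := rothNumberNat_spec n
  refine ⟨t.image (· + 1), ?_, ?_, ?_⟩
  · intro x hx
    simp only [mem_image] at hx
    obtain ⟨a, ha, rfl⟩ := hx
    have := mem_range.1 (hts ha)
    simp only [Finset.mem_Icc]
    omega
  · intro x hx y hy z hz hxy hyz hxz h
    simp only [mem_image] at hx hy hz
    obtain ⟨a, ha, rfl⟩ := hx
    obtain ⟨b, hb, rfl⟩ := hy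
    obtain ⟨c, hc, rfl⟩ := hz
    exact hxy (by rw [htfree ha hb hc (by omega)])
  · rw [Finset.card_image_of_injective _ (add_left_injective 1), htcard]
    calc (n : ℝ) ^ ((1 : ℝ) - ε) ≤ (n : ℝ) * Real.exp (-4 * Real.sqrt (Real.log n)) := by
          have hsq : 4 / ε ≤ Real.sqrt (Real.log n) := by
            rw [Real.le_sqrt (by positivity) hlogpos]
            calc (4 / ε) ^ 2 = 16 / ε ^ 2 := by ring
            _ ≤ _ := hlog
          have key : 4 * Real.sqrt (Real.log n) ≤ ε * Real.log n := by
            have hms : Real.sqrt (Real.log n) * Real.sqrt (Real.log n) = Real.log n :=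
              Real.mul_self_sqrt hlogpos
            calc 4 * Real.sqrt (Real.log n) = ε * ((4 / ε) * Real.sqrt (Real.log n)) := by
                  field_simp
            _ ≤ ε * (Real.sqrt (Real.log n) * Real.sqrt (Real.log n)) := by
                  apply mul_le_mul_of_nonneg_left _ hε.le
                  exact mul_le_mul_of_nonneg_right hsq (Real.sqrt_nonneg _)
            _ = ε * Real.log n := by rw [hms]
          rw [Real.rpow_sub hn0, Real.rpow_one, div_le_iff₀ (by positivity)]
          rw [Real.rpow_def_of_pos hn0, mul_assoc, ← Real.exp_add]
          nth_rewrite 1 [show (n : ℝ) = n * 1 by ring]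
          apply mul_le_mul_of_nonneg_left _ hn0.le
          rw [show (1 : ℝ) = Real.exp 0 by simp]
          apply Real.exp_le_exp.2
          linarith
      _ ≤ rothNumberNat n := Behrend.roth_lower_bound
end

section
/- Erdős's upper bound: for fixed positive integers s_1 ≤ ... ≤ s_r and s = s_1·s_2···s_{r-1}, there is a constant C such that every r-uniform hypergraph on n vertices with more than C·n^{r - 1/s} edges contains a copy of the complete r-partite r-graph K(s_1,...,s_r). -/
/-- `HasKCopy E t`: the `r`-uniform hypergraph on `Fin n` with edge set `E` contains a
copy of the complete `r`-partite `r`-graph `K(t 0, ..., t (r-1))`: pairwise disjoint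
vertex sets `S i` of sizes `t i` all of whose transversals are edges. -/
def HasKCopy {r n : ℕ} (E : Finset (Finset (Fin n))) (t : Fin r → ℕ) : Prop :=
  ∃ S : Fin r → Finset (Fin n),
    (∀ i j, i ≠ j → Disjoint (S i) (S j)) ∧ (∀ i, (S i).card = t i) ∧
    ∀ f : Fin r → Fin n, (∀ i, f i ∈ S i) → Finset.image f Finset.univ ∈ E

/-!
Induction on `r`, splitting off the first part. For a `k`-set `T` let `d(T)` count the vertices
`v` with `T ∪ {v} ∈ E`, so that `∑_T d(T) = (k + 1)|E|`. A copy of `K(p₁, …, p_k)` in the common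
link of a `p₀`-set `S` (the `k`-sets `T` with `T ∪ {v} ∈ E` for all `v ∈ S`) extends by `S` to a
copy of `K(p₀, …, p_k)`. So if `E` has no copy, induction bounds every common link by
`C' n^(k - δ)`, and double counting gives `∑_T C(d(T), p₀) ≤ n^p₀ · C' n^(k - δ)`. As
`(d - p₀)^p₀ ≤ p₀! C(d, p₀)`, the power-mean inequality bounds `∑_T (d(T) - p₀)`, hence `|E|`,
by `O(n^(k + 1 - δ/p₀))`. The case `r = 0` holds with any exponent; taking `δ = p₀` there gives
deficit `1` for `r = 1`, and each later step divides it by the size of the part split off.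
-/

open Finset
open scoped Nat Function

section Link

variable {α : Type*} [Fintype α] [DecidableEq α]

def extensions (E : Finset (Finset α)) (T : Finset α) : Finset α :=
  {v | v ∉ T ∧ insert v T ∈ E}

def commonLink (E : Finset (Finset α)) (k : ℕ) (S : Finset α) : Finset (Finset α) :=
  {T ∈ powersetCard k univ | S ⊆ extensions E T}

lemma card_of_mem_commonLink {E : Finset (Finset α)} {k : ℕ} {S T : Finset α}
    (hT : T ∈ commonLink E k S) : #T = k :=
  (mem_powersetCard.1 (mem_filter.1 hT).1).2

lemma sum_card_extensions {E : Finset (Finset α)} {k : ℕ} (hE : ∀ e ∈ E, #e = k + 1) :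
    ∑ T ∈ powersetCard k univ, #(extensions E T) = (k + 1) * #E := by
  have hpairs : #((powersetCard k univ).sigma (extensions E)) = #(E.sigma fun e => e) := by
    refine card_bij' (fun a _ => ⟨insert a.2 a.1, a.2⟩) (fun b _ => ⟨b.1.erase b.2, b.2⟩)
      ?_ ?_ ?_ ?_
    · rintro ⟨T, v⟩ h
      simp only [extensions, mem_sigma, mem_filter, mem_univ, true_and] at h
      simpa using h.2.2
    · rintro ⟨e, v⟩ h
      simp only [mem_sigma] at h
      simp [extensions, card_erase_of_mem h.2, hE e h.1, insert_erase h.2, h.1]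
    · rintro ⟨T, v⟩ h
      simp only [extensions, mem_sigma, mem_filter, mem_univ, true_and] at h
      simp [erase_insert h.2.1]
    · rintro ⟨e, v⟩ h
      simp only [mem_sigma] at h
      simp [insert_erase h.2]
  rw [card_sigma, card_sigma, sum_congr rfl hE, sum_const, smul_eq_mul, mul_comm] at hpairs
  exact hpairs

lemma add_one_mul_card_le_sum_tsub_add {E : Finset (Finset α)} {k : ℕ}
    (hE : ∀ e ∈ E, #e = k + 1) (t : ℕ) :
    (k + 1) * #E ≤ ∑ T ∈ powersetCard k univ, (#(extensions E T) - t) +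
      t * Fintype.card α ^ k := by
  rw [← sum_card_extensions hE]
  calc ∑ T ∈ powersetCard k univ, #(extensions E T)
      ≤ ∑ T ∈ powersetCard k univ, ((#(extensions E T) - t) + t) :=
        sum_le_sum fun _ _ => le_tsub_add
    _ ≤ _ := by
        rw [sum_add_distrib, sum_const, card_powersetCard, card_univ, smul_eq_mul, mul_comm]
        gcongr
        exact Nat.choose_le_pow _ k

/-- Both sides count the pairs `(S, T)` with `#S = t`, `#T = k` and `S ⊆ extensions E T`. -/
lemma sum_card_commonLink (E : Finset (Finset α)) (k t : ℕ) :
    ∑ S ∈ powersetCard t univ, #(commonLink E k S) =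
      ∑ T ∈ powersetCard k univ, (#(extensions E T)).choose t := by
  simp only [commonLink, card_filter]
  rw [sum_comm]
  refine sum_congr rfl fun T _ => ?_
  rw [← card_filter, ← card_powersetCard]
  congr 1
  ext S
  simp [and_comm]

end Link

lemma exists_transversal_apply_eq {ι β : Type*} [DecidableEq ι] {P : ι → Finset β}
    (hP : ∀ i, (P i).Nonempty) {i : ι} {v : β} (hv : v ∈ P i) :
    ∃ f : ι → β, (∀ j, f j ∈ P j) ∧ f i = v := by
  refine ⟨Function.update (fun j => (hP j).choose) i v, fun j => ?_, by simp⟩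
  rcases eq_or_ne j i with rfl | hj
  · simpa using hv
  · simpa [Function.update_of_ne hj] using (hP j).choose_spec

lemma Fin.pairwise_cons {m : ℕ} {β : Type*} {R : β → β → Prop} [Std.Symm R] {b : β}
    {f : Fin m → β} (hb : ∀ i, R b (f i)) (hf : Pairwise (R on f)) :
    Pairwise (R on (Fin.cons b f : Fin (m + 1) → β)) := by
  intro i j hij
  cases i using Fin.cases <;> cases j using Fin.cases
  · exact absurd rfl hij
  · exact hb _
  · exact symm_of R (hb _)
  · exact hf (fun h => hij (congrArg Fin.succ h))

lemma Fin.image_univ_eq_insert_tail {m : ℕ} {β : Type*} [DecidableEq β] (f : Fin (m + 1) → β) :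
    image f univ = insert (f 0) (image (Fin.tail f) univ) := by
  ext a
  simp [Fin.exists_fin_succ, Fin.tail, eq_comm]

lemma HasKCopy.of_commonLink {n k : ℕ} {E : Finset (Finset (Fin n))} {p : Fin (k + 1) → ℕ}
    (hp : ∀ i, 0 < Fin.tail p i) {S : Finset (Fin n)} (hS : #S = p 0)
    (h : HasKCopy (commonLink E k S) (Fin.tail p)) : HasKCopy E p := by
  obtain ⟨P, hdisj, hcard, htrans⟩ := h
  have hne : ∀ i, (P i).Nonempty := fun i => card_pos.1 ((hcard i).symm ▸ hp i)
  have hlink : ∀ f : Fin k → Fin n, (∀ i, f i ∈ P i) → S ⊆ extensions E (image f univ) :=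
    fun f hf => (mem_filter.1 (htrans f hf)).2
  -- A vertex of a (nonempty) part lies on an edge of the link, which `S` avoids.
  have hSdisj : ∀ i, Disjoint S (P i) := by
    refine fun i => disjoint_right.2 fun v hv hvS => ?_
    obtain ⟨f, hf, rfl⟩ := exists_transversal_apply_eq hne hv
    exact (mem_filter.1 (hlink f hf hvS)).2.1 (mem_image_of_mem f (mem_univ i))
  refine ⟨Fin.cons S P, Fin.pairwise_cons hSdisj hdisj,
    Fin.cases hS hcard, fun f hf => ?_⟩
  rw [Fin.image_univ_eq_insert_tail]
  exact (mem_filter.1 (hlink (Fin.tail f) (fun i => hf i.succ) (hf 0))).2.2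

lemma Nat.tsub_pow_le_factorial_mul_choose (d t : ℕ) : (d - t) ^ t ≤ t ! * d.choose t :=
  calc (d - t) ^ t ≤ (d + 1 - t) ^ t := Nat.pow_le_pow_left (by omega) t
    _ ≤ d.descFactorial t := d.pow_sub_le_descFactorial t
    _ = t ! * d.choose t := d.descFactorial_eq_factorial_mul_choose t

lemma sum_tsub_pow_le {ι : Type*} (P : Finset ι) (d : ι → ℕ) {t : ℕ} (ht : 0 < t) :
    (∑ i ∈ P, (d i - t)) ^ t ≤ #P ^ (t - 1) * (t ! * ∑ i ∈ P, (d i).choose t) := by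
  obtain ⟨s, rfl⟩ : ∃ s, t = s + 1 := ⟨t - 1, by omega⟩
  calc (∑ i ∈ P, (d i - (s + 1))) ^ (s + 1)
      ≤ #P ^ s * ∑ i ∈ P, (d i - (s + 1)) ^ (s + 1) :=
        pow_sum_le_card_mul_sum_pow (fun _ _ => Nat.zero_le _) s
    _ ≤ #P ^ s * ∑ i ∈ P, (s + 1) ! * (d i).choose (s + 1) := by
        gcongr with i
        exact Nat.tsub_pow_le_factorial_mul_choose _ _
    _ = _ := by rw [Nat.add_sub_cancel, ← mul_sum]

/-- `ex_r(n, K(p)) ≤ C n^x` for every `n`. -/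
def ExBound {r : ℕ} (p : Fin r → ℕ) (C x : ℝ) : Prop :=
  ∀ n (E : Finset (Finset (Fin n))), (∀ e ∈ E, #e = r) → ¬ HasKCopy E p → (#E : ℝ) ≤ C * n ^ x

lemma exBound_fin_zero (p : Fin 0 → ℕ) (x : ℝ) : ExBound p 0 x := by
  intro n E hE hno
  suffices E = ∅ by simp [this]
  refine eq_empty_of_forall_notMem fun e he =>
    hno ⟨Fin.elim0, fun i => i.elim0, fun i => i.elim0, fun f _ => ?_⟩
  rwa [univ_eq_empty, image_empty, ← card_eq_zero.1 (hE e he)]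

lemma sum_choose_card_extensions_le {k : ℕ} {p : Fin (k + 1) → ℕ} (hp : ∀ i, 0 < p i)
    {C x : ℝ} (hC : 0 ≤ C) (h : ExBound (Fin.tail p) C x) {n : ℕ} {E : Finset (Finset (Fin n))}
    (hno : ¬ HasKCopy E p) :
    (∑ T ∈ powersetCard k univ, (#(extensions E T)).choose (p 0) : ℝ) ≤
      n ^ p 0 * (C * n ^ x) := by
  have hlink (S) (hS : S ∈ powersetCard (p 0) univ) : (#(commonLink E k S) : ℝ) ≤ C * n ^ x :=
    h n _ (fun _ => card_of_mem_commonLink) fun hcopy =>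
      hno (hcopy.of_commonLink (fun i => hp i.succ) (mem_powersetCard.1 hS).2)
  calc (∑ T ∈ powersetCard k univ, (#(extensions E T)).choose (p 0) : ℝ)
      = ∑ S ∈ powersetCard (p 0) univ, (#(commonLink E k S) : ℝ) := by
        exact_mod_cast (sum_card_commonLink E k (p 0)).symm
    _ ≤ #(powersetCard (p 0) (univ : Finset (Fin n))) • (C * n ^ x) :=
        sum_le_card_nsmul _ _ _ hlink
    _ ≤ _ := by
        rw [nsmul_eq_mul, card_powersetCard, card_univ, Fintype.card_fin]
        gcongr
        exact_mod_cast n.choose_le_pow (p 0)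

lemma ExBound.cons {k : ℕ} {p : Fin (k + 1) → ℕ} (hp : ∀ i, 0 < p i) {C δ : ℝ} (hC : 0 ≤ C)
    (hδ : δ ≤ p 0) (h : ExBound (Fin.tail p) C (k - δ)) :
    ExBound p (p 0 + ((p 0)! * C) ^ (p 0 : ℝ)⁻¹) (k + 1 - δ / p 0) := by
  intro n E hE hno
  set t := p 0
  set B := (t ! * C) ^ (t : ℝ)⁻¹
  set x : ℝ := k + 1 - δ / t with hx
  have ht : 0 < t := hp 0
  obtain rfl | ⟨e, he⟩ := E.eq_empty_or_nonempty
  · simp only [card_empty, Nat.cast_zero]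
    positivity
  have hn : 0 < n := by
    have := card_le_univ e
    simp only [hE e he, Fintype.card_fin] at this
    omega
  have hn' : (0 : ℝ) < n := by exact_mod_cast hn
  have hkx : (k : ℝ) ≤ x := by
    have : δ / t ≤ 1 := div_le_one_of_le₀ hδ (by positivity)
    linarith
  have hchoose := sum_choose_card_extensions_le hp hC h hno
  set L := ∑ T ∈ powersetCard k univ, (#(extensions E T) - t)
  have hexp : ((n : ℝ) ^ k) ^ (t - 1) * (n ^ t * n ^ (k - δ)) = ((n : ℝ) ^ x) ^ t := by
    rw [← pow_mul, ← Real.rpow_natCast, ← Real.rpow_natCast (n : ℝ) t, ← Real.rpow_natCast _ t,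
      ← Real.rpow_mul hn'.le, ← Real.rpow_add hn', ← Real.rpow_add hn']
    congr 1
    push_cast [Nat.cast_sub ht]
    rw [hx]
    field_simp
    ring
  have hL : (L : ℝ) ≤ B * n ^ x := by
    rw [← pow_le_pow_iff_left₀ (by positivity) (by positivity) ht.ne']
    calc (L : ℝ) ^ t
        ≤ (#(powersetCard k (univ : Finset (Fin n))) : ℝ) ^ (t - 1) *
            (t ! * ∑ T ∈ powersetCard k univ, ((#(extensions E T)).choose t : ℝ)) := by
          exact_mod_cast sum_tsub_pow_le _ _ ht
      _ ≤ ((n : ℝ) ^ k) ^ (t - 1) * (t ! * (n ^ t * (C * n ^ (k - δ)))) := by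
          rw [card_powersetCard, card_univ, Fintype.card_fin]
          gcongr
          exact_mod_cast n.choose_le_pow k
      _ = (B * n ^ x) ^ t := by
          rw [mul_pow, ← hexp, Real.rpow_inv_natCast_pow (by positivity) ht.ne']
          ring
  have hdeg : (k + 1) * #E ≤ L + t * n ^ k := by
    simpa using add_one_mul_card_le_sum_tsub_add hE t
  have hnk : ((n : ℝ) ^ k) ≤ n ^ x := by
    rw [← Real.rpow_natCast]
    exact Real.rpow_le_rpow_of_exponent_le (by exact_mod_cast hn) hkx
  calc (#E : ℝ) ≤ (k + 1) * #E := le_mul_of_one_le_left (by positivity) (by linarith)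
    _ ≤ L + t * n ^ k := by exact_mod_cast hdeg
    _ ≤ B * n ^ x + t * n ^ x := by gcongr
    _ = (t + B) * n ^ x := by ring

lemma exists_exBound (m : ℕ) (p : Fin (m + 1) → ℕ) (hp : ∀ i, 0 < p i) :
    ∃ C, 0 ≤ C ∧ ExBound p C (m + 1 - 1 / ((∏ i : Fin m, p i.castSucc : ℕ) : ℝ)) := by
  induction m with
  | zero =>
    have hp0 : (p 0 : ℝ) ≠ 0 := by exact_mod_cast (hp 0).ne'
    refine ⟨p 0, by positivity, ?_⟩
    convert (exBound_fin_zero (Fin.tail p) _).cons hp le_rfl le_rfl using 1 <;> simp [hp0]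
  | succ m ih =>
    obtain ⟨C, hC, hbound⟩ := ih (Fin.tail p) fun i => hp i.succ
    rw [← Nat.cast_succ] at hbound
    refine ⟨p 0 + ((p 0)! * C) ^ (p 0 : ℝ)⁻¹, by positivity, ?_⟩
    convert hbound.cons hp hC ?_ using 2
    · simp only [Fin.prod_univ_succ, Fin.castSucc_zero, Fin.castSucc_succ, Nat.cast_mul,
        Nat.cast_prod, one_div, mul_inv_rev, Fin.tail]
      ring
    · have hs' : 1 ≤ ∏ i : Fin m, Fin.tail p i.castSucc := one_le_prod' fun i _ => hp _
      exact (div_le_one_of_le₀ (by exact_mod_cast hs') (by positivity)).trans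
        (by exact_mod_cast hp 0)

/-- Erdős's upper bound: for fixed `1 ≤ s_1 ≤ ⋯ ≤ s_r` and `s = s_1 ⋯ s_{r-1}`, there is
a constant `C` such that every `r`-uniform hypergraph on `n` vertices with more than
`C · n^(r - 1/s)` edges contains a copy of `K(s_1, ..., s_r)`. -/
theorem erdos_box (r : ℕ) (p : Fin r → ℕ)
    (hp : ∀ i, 0 < p i) :
    ∃ C : ℝ, ∀ n : ℕ, ∀ E : Finset (Finset (Fin n)),
      (∀ e ∈ E, e.card = r) →
      (E.card : ℝ) >
        C * (n : ℝ) ^ ((r : ℝ) - 1 / ((∏ i : Fin (r - 1), p (Fin.castLE (by omega) i) : ℕ) : ℝ)) →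
      HasKCopy E p := by
  suffices ∃ C, ExBound p C (r - 1 / ((∏ i : Fin (r - 1), p (Fin.castLE (by omega) i) : ℕ) : ℝ)) by
    obtain ⟨C, hC⟩ := this
    exact ⟨C, fun n E hE hgt => by_contra fun hno => (hC n E hE hno).not_gt hgt⟩
  cases r with
  | zero => exact ⟨0, exBound_fin_zero p _⟩
  | succ m =>
    obtain ⟨C, -, hC⟩ := exists_exBound m p hp
    rw [Nat.cast_succ]
    exact ⟨C, hC⟩
end
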